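/- Let λ1, λ2, λ3, λ4 ∈ M be dominant weights satisfying λ1 + λ2 = λ3 + λ4 and, for every positive root α, |⟨λ1 − λ2, α^∨⟩| ≤ |⟨λ3 − λ4, α^∨⟩|. Assume moreover that both polytopes P_{λ1,λ2} and P_{λ3,λ4} are contained in the closed dominant chamber C_f. Then for every Weyl group element w ∈ W, the point λ3 + w(λ4) lies in the polytope P_{λ1,λ2}. -/

import Mathlib

open Set Module Function

/-- A root system: a root pairing whose roots and coroots span (the old Mathlib structure). -/
structure RootSystem (ι R M N : Type*) [CommRing R] [AddCommGroup M] [Module R M]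
    [AddCommGroup N] [Module R N] extends RootPairing ι R M N where
  span_eq_top : Submodule.span R (range root) = ⊤
  span_eq_top' : Submodule.span R (range coroot) = ⊤

/-- The Weyl group as a subgroup of `M ≃ₗ[R] M` (the old Mathlib definition). -/
def RootSystem.weylGroup {ι R M N : Type*} [CommRing R] [AddCommGroup M] [Module R M]
    [AddCommGroup N] [Module R N] (P : RootSystem ι R M N) : Subgroup (M ≃ₗ[R] M) :=
  Subgroup.closure (range P.reflection)

/-- `b : I → ι` indexes a base of simple roots of the root system `P`: the map is injective,
the simple roots are linearly independent, and every root is either a nonnegative or a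
nonpositive integer combination of the simple roots. -/
structure RootSystem.IsBase {ι M N I : Type*} [Fintype I]
    [AddCommGroup M] [Module ℝ M] [AddCommGroup N] [Module ℝ N]
    (P : RootSystem ι ℝ M N) (b : I → ι) : Prop where
  injective : Function.Injective b
  linearIndependent : LinearIndependent ℝ fun i : I => P.root (b i)
  exists_coeffs : ∀ j : ι,
    (∃ c : I → ℕ, P.root j = ∑ i, (c i : ℝ) • P.root (b i)) ∨
    (∃ c : I → ℕ, P.root j = - ∑ i, (c i : ℝ) • P.root (b i))

/-- The root indexed by `j` is a positive root with respect to the base `b`: it is a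
nonnegative integer combination of the simple roots. -/
def RootSystem.IsPositiveRoot {ι M N I : Type*} [Fintype I]
    [AddCommGroup M] [Module ℝ M] [AddCommGroup N] [Module ℝ N]
    (P : RootSystem ι ℝ M N) (b : I → ι) (j : ι) : Prop :=
  ∃ c : I → ℕ, P.root j = ∑ i, (c i : ℝ) • P.root (b i)

/-- A weight `x ∈ M` is dominant if its pairing with every simple coroot is nonnegative. -/
def RootSystem.IsDominant {ι M N I : Type*}
    [AddCommGroup M] [Module ℝ M] [AddCommGroup N] [Module ℝ N]
    (P : RootSystem ι ℝ M N) (b : I → ι) (x : M) : Prop :=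
  ∀ i : I, 0 ≤ P.coroot' (b i) x

/-- The closed dominant (fundamental) chamber `C_f`. -/
def RootSystem.chamber {ι M N I : Type*}
    [AddCommGroup M] [Module ℝ M] [AddCommGroup N] [Module ℝ N]
    (P : RootSystem ι ℝ M N) (b : I → ι) : Set M :=
  {x : M | P.IsDominant b x}

/-- The polytope `P_{λ,μ}`: the convex hull of the orbit-translate `{λ + w μ : w ∈ W}`. -/
def RootSystem.orbitPolytope {ι M N : Type*}
    [AddCommGroup M] [Module ℝ M] [AddCommGroup N] [Module ℝ N]
    (P : RootSystem ι ℝ M N) (lam mu : M) : Set M :=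
  convexHull ℝ {x : M | ∃ w ∈ P.weylGroup, x = lam + w mu}

/-! If `λ₃ + w λ₄` were outside `P_{λ₁,λ₂}`, a linear functional `F` would separate it from the
vertices `λ₁ + u λ₂`. Some `u₀ ∈ W` maximises `F` on every orbit `W • y` of a dominant `y` at
once: take `u₀` maximising `F (u ρ)` for a strictly dominant `ρ`, so that `F ∘ u₀` is
nonnegative on the simple roots, and use that `y - v y` is a nonnegative combination of simple
roots for dominant `y` (induction on the length of a word for `v`, by the exchange condition).
Now `λ₃ + w λ₄ = λ₁ + (λ₂ - λ₄) + w λ₄`, and `λ₂ - λ₄` is dominant: the vertices `λ + sᵢ μ` lie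
in `C_f`, so `λ₁ - λ₂` and `λ₃ - λ₄` are dominant, the inequality at a simple root `αᵢ` reads
`⟨λ₁ - λ₂, αᵢ^∨⟩ ≤ ⟨λ₃ - λ₄, αᵢ^∨⟩`, and `(λ₃ - λ₄) - (λ₁ - λ₂) = 2 (λ₂ - λ₄)`.
Hence `F (λ₃ + w λ₄) ≤ F (λ₁ + u₀ λ₂)`, a contradiction. -/

lemma mem_convexHull_of_forall_exists_le {E : Type*} [AddCommGroup E] [Module ℝ E]
    [FiniteDimensional ℝ E] {s : Set E} (hs : s.Finite) {x : E}
    (h : ∀ F : E →ₗ[ℝ] ℝ, ∃ a ∈ s, F x ≤ F a) : x ∈ convexHull ℝ s := by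
  by_contra hx
  let e : E ≃ₗ[ℝ] EuclideanSpace ℝ (Fin (finrank ℝ E)) :=
    (finBasis ℝ E).equivFun.trans (WithLp.linearEquiv 2 ℝ _).symm
  have hex : e x ∉ convexHull ℝ (e '' s) := by
    rw [← LinearEquiv.coe_coe, ← LinearMap.image_convexHull]
    rintro ⟨y, hy, hyx⟩
    exact hx (e.injective hyx ▸ hy)
  obtain ⟨f, u, hlt, hgt⟩ := geometric_hahn_banach_closed_point (convex_convexHull ℝ _)
    ((hs.image e).isClosed_convexHull (𝕜 := ℝ)) hex
  obtain ⟨a, ha, hle⟩ := h (f.toLinearMap ∘ₗ e.toLinearMap)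
  exact (hlt _ (subset_convexHull ℝ _ (mem_image_of_mem e ha))).not_ge (hgt.le.trans hle)

namespace RootPairing

variable {ι M N : Type*} [AddCommGroup M] [Module ℝ M] [AddCommGroup N] [Module ℝ N]
  {P : RootPairing ι ℝ M N}

lemma reflection_mul_reflection (i : ι) : P.reflection i * P.reflection i = 1 := by
  rw [← sq, reflection_sq]

lemma reflection_reflectionPerm_self (i : ι) :
    P.reflection (P.reflectionPerm i i) = P.reflection i := by
  rw [reflection_reflectionPerm, reflection_mul_reflection, one_mul]

namespace Base

lemma IsPos.apply_root_nonneg [Finite ι] [P.IsCrystallographic] {B : P.Base} {j : ι}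
    (hj : B.IsPos j) {G : M →ₗ[ℝ] ℝ} (hG : ∀ i ∈ B.support, 0 ≤ G (P.root i)) :
    0 ≤ G (P.root j) :=
  hj.induction_on_add hG fun _ k _ hsum hi hk => by
    rw [hsum, map_add]
    exact add_nonneg hi (hG k hk)

variable (B : P.Base)

lemma exists_forall_coroot'_eq_one : ∃ ρ : M, ∀ i ∈ B.support, P.coroot' i ρ = 1 := by
  obtain ⟨f, hf⟩ := exists_dual_forall_apply_eq_one B.linearIndepOn_coroot
  exact ⟨P.toLinearMap.toPerfPair.symm f, fun i hi => by simpa using hf i hi⟩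

def reflectionWord (l : List B.support) : M ≃ₗ[ℝ] M :=
  (l.map fun i => P.reflection i).prod

def reflectionPermWord (l : List B.support) : Equiv.Perm ι :=
  (l.map fun i => P.reflectionPerm i).prod

@[simp]
lemma reflectionWord_nil : B.reflectionWord [] = 1 := rfl

@[simp]
lemma reflectionWord_cons (i : B.support) (l : List B.support) :
    B.reflectionWord (i :: l) = P.reflection i * B.reflectionWord l := by
  simp [reflectionWord]

@[simp]
lemma reflectionWord_append (l l' : List B.support) :
    B.reflectionWord (l ++ l') = B.reflectionWord l * B.reflectionWord l' := by
  simp [reflectionWord]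

@[simp]
lemma reflectionPermWord_nil : B.reflectionPermWord [] = 1 := rfl

@[simp]
lemma reflectionPermWord_cons (i : B.support) (l : List B.support) :
    B.reflectionPermWord (i :: l) = P.reflectionPerm i * B.reflectionPermWord l := by
  simp [reflectionPermWord]

lemma root_reflectionPermWord (l : List B.support) (j : ι) :
    P.root (B.reflectionPermWord l j) = B.reflectionWord l (P.root j) := by
  induction l with
  | nil => rfl
  | cons i l ih => simp [root_reflectionPerm, ih]

lemma reflection_reflectionPermWord (l : List B.support) (j : ι) :
    P.reflection (B.reflectionPermWord l j) =
      B.reflectionWord l * P.reflection j * (B.reflectionWord l)⁻¹ := by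
  induction l with
  | nil => simp
  | cons i l ih => simp [reflection_reflectionPerm, ih, mul_assoc]

variable [Finite ι] [P.IsCrystallographic] [P.IsReduced]

lemma exists_reflectionWord_eq_reflection (j : ι) :
    ∃ l : List B.support, B.reflectionWord l = P.reflection j := by
  refine B.induction_reflect (p := fun j => ∃ l, B.reflectionWord l = P.reflection j) j
    (fun i ⟨l, hl⟩ => ⟨l, by rw [hl, reflection_reflectionPerm_self]⟩)
    (fun i hi => ⟨[⟨i, hi⟩], by simp⟩) fun i k ⟨l, hl⟩ hk => ⟨⟨k, hk⟩ :: l ++ [⟨k, hk⟩], ?_⟩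
  simp [hl, reflection_reflectionPerm, mul_assoc]

lemma exists_reflectionWord_eq {w : M ≃ₗ[ℝ] M} (hw : w ∈ Subgroup.closure (range P.reflection)) :
    ∃ l : List B.support, B.reflectionWord l = w := by
  induction hw using Subgroup.closure_induction'' with
  | mem _ h | inv_mem _ h =>
    obtain ⟨j, rfl⟩ := h
    exact B.exists_reflectionWord_eq_reflection j
  | one => exact ⟨[], rfl⟩
  | mul _ _ _ _ h h' =>
    obtain ⟨l, rfl⟩ := h
    obtain ⟨l', rfl⟩ := h'
    exact ⟨l ++ l', B.reflectionWord_append l l'⟩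

/-- The exchange condition. -/
lemma exists_reflectionWord_eq_mul_reflection (l : List B.support) (i : B.support)
    (hneg : ¬ B.IsPos (B.reflectionPermWord l i)) :
    ∃ l' : List B.support, l'.length < l.length ∧
      B.reflectionWord l' = B.reflectionWord l * P.reflection i := by
  induction l with
  | nil => exact absurd (isPos_of_mem_support i.2) hneg
  | cons k l ih =>
    by_cases hpos : B.IsPos (B.reflectionPermWord l i)
    · have hk : B.reflectionPermWord l i = k := by
        by_contra hne
        exact hneg (by simpa using hpos.reflectionPerm k.2 hne)
      have hconj := B.reflection_reflectionPermWord l i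
      rw [hk] at hconj
      refine ⟨l, by simp, ?_⟩
      rw [reflectionWord_cons, hconj]
      simp [mul_assoc, reflection_mul_reflection]
    · obtain ⟨l', hlen, hl'⟩ := ih hpos
      exact ⟨k :: l', by simpa, by simp [hl', mul_assoc]⟩

/-- Split off the last letter: `y - v sᵢ y = (y - v y) + ⟨y, αᵢ^∨⟩ v αᵢ` when `v αᵢ` is a positive
root, and otherwise the exchange condition shortens the word. -/
lemma apply_reflectionWord_le {G : M →ₗ[ℝ] ℝ} (hG : ∀ i ∈ B.support, 0 ≤ G (P.root i))
    {y : M} (hy : ∀ i ∈ B.support, 0 ≤ P.coroot' i y) (l : List B.support) :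
    G (B.reflectionWord l y) ≤ G y := by
  induction hn : l.length using Nat.strong_induction_on generalizing l with
  | _ n ih =>
    rcases l.eq_nil_or_concat' with rfl | ⟨l, i, rfl⟩
    · simp
    by_cases hpos : B.IsPos (B.reflectionPermWord l i)
    · have hw : B.reflectionWord (l ++ [i]) y =
          B.reflectionWord l y - P.coroot' i y • P.root (B.reflectionPermWord l i) := by
        simp [reflection_apply, root_reflectionPermWord]
      rw [hw, map_sub, map_smul, smul_eq_mul]
      have := ih l.length (by simp [← hn]) l rfl
      nlinarith [hpos.apply_root_nonneg hG, hy i i.2]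
    · obtain ⟨l', hlen, hl'⟩ := B.exists_reflectionWord_eq_mul_reflection l i hpos
      have hword : B.reflectionWord (l ++ [i]) = B.reflectionWord l' := by simp [hl']
      rw [hword]
      exact ih l'.length (by simp at hn; omega) l' rfl

end Base

end RootPairing

namespace RootSystem

variable {ι M N I : Type*} [AddCommGroup M] [Module ℝ M] [AddCommGroup N] [Module ℝ N]

lemma finiteDimensional [Finite ι] (P : RootSystem ι ℝ M N) : FiniteDimensional ℝ M :=
  Module.finite_def.mpr ⟨(finite_range P.root).toFinset, by simpa using P.span_eq_top⟩

variable (P : RootSystem ι ℝ M N)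

instance : P.toRootPairing.IsRootSystem := ⟨P.span_eq_top, P.span_eq_top'⟩

lemma reflection_mem_weylGroup (j : ι) : P.reflection j ∈ P.weylGroup :=
  Subgroup.subset_closure ⟨j, rfl⟩

lemma mapsTo_root_of_mem_weylGroup {w : M ≃ₗ[ℝ] M} (hw : w ∈ P.weylGroup) :
    MapsTo w (range P.root) (range P.root) := by
  induction hw using Subgroup.closure_induction'' with
  | mem _ h | inv_mem _ h =>
    obtain ⟨i, rfl⟩ := h
    rintro _ ⟨j, rfl⟩
    exact ⟨P.reflectionPerm i j, P.root_reflectionPerm i j⟩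
  | one => exact mapsTo_id _
  | mul _ _ _ _ h h' => exact h.comp h'

instance [Finite ι] : Finite P.weylGroup := by
  refine Finite.of_injective (β := ι → range P.root)
    (fun w j => ⟨w.1 (P.root j), P.mapsTo_root_of_mem_weylGroup w.2 (mem_range_self j)⟩) ?_
  intro w w' h
  refine Subtype.ext (LinearEquiv.toLinearMap_injective (LinearMap.ext_on_range P.span_eq_top ?_))
  exact fun j => congrArg Subtype.val (congrFun h j)

lemma finite_orbit [Finite ι] (lam mu : M) :
    {x : M | ∃ w ∈ P.weylGroup, x = lam + w mu}.Finite :=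
  (finite_range fun w : P.weylGroup => lam + w.1 mu).subset fun _ ⟨w, hw, hx⟩ => ⟨⟨w, hw⟩, hx.symm⟩

variable {P}

lemma exists_mem_weylGroup_forall_nonneg [Finite ι] (B : P.Base) (F : M →ₗ[ℝ] ℝ) :
    ∃ u ∈ P.weylGroup, ∀ i ∈ B.support, 0 ≤ F (u (P.root i)) := by
  obtain ⟨ρ, hρ⟩ := B.exists_forall_coroot'_eq_one
  -- `sᵢ ρ = ρ - αᵢ`, so a maximiser `u` of `F (u ρ)` has `F (u αᵢ) ≥ 0`
  obtain ⟨u, hu⟩ := Finite.exists_max fun u : P.weylGroup => F (u.1 ρ)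
  refine ⟨u, u.2, fun i hi => ?_⟩
  have := hu ⟨u * P.reflection i, mul_mem u.2 (P.reflection_mem_weylGroup i)⟩
  rw [LinearEquiv.mul_apply, RootPairing.reflection_apply, hρ i hi, one_smul, map_sub,
    map_sub] at this
  linarith

lemma exists_mem_weylGroup_forall_apply_le [Finite ι] [P.IsCrystallographic] [P.IsReduced]
    (B : P.Base) (F : M →ₗ[ℝ] ℝ) :
    ∃ u ∈ P.weylGroup, ∀ v ∈ P.weylGroup, ∀ y : M, (∀ i ∈ B.support, 0 ≤ P.coroot' i y) →
      F (v y) ≤ F (u y) := by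
  obtain ⟨u, hu, hF⟩ := exists_mem_weylGroup_forall_nonneg B F
  refine ⟨u, hu, fun v hv y hy => ?_⟩
  obtain ⟨l, hl⟩ := B.exists_reflectionWord_eq (mul_mem (inv_mem hu) hv)
  simpa [hl] using B.apply_reflectionWord_le (G := F ∘ₗ u.toLinearMap) hF hy l

variable {b : I → ι}

lemma isDominant_sub_of_orbitPolytope_subset_chamber {lam mu : M}
    (h : P.orbitPolytope lam mu ⊆ P.chamber b) : P.IsDominant b (lam - mu) := by
  intro i
  have := h (subset_convexHull ℝ _ ⟨P.reflection (b i), P.reflection_mem_weylGroup _, rfl⟩) i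
  simp [RootPairing.reflection_apply] at this ⊢
  linarith

variable [Fintype I]

lemma isPositiveRoot_simple (i : I) : P.IsPositiveRoot b (b i) := by
  classical
  unfold IsPositiveRoot
  exact ⟨Pi.single i 1, by simp [Pi.single_apply]⟩

lemma IsBase.root_mem_or_neg_mem_closure (hb : P.IsBase b) (j : ι) :
    P.root j ∈ AddSubmonoid.closure (P.root '' range b) ∨
      -P.root j ∈ AddSubmonoid.closure (P.root '' range b) := by
  have hsum (c : I → ℕ) :
      ∑ i, (c i : ℝ) • P.root (b i) ∈ AddSubmonoid.closure (P.root '' range b) :=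
    sum_mem fun i _ => by
      rw [Nat.cast_smul_eq_nsmul]
      exact nsmul_mem (AddSubmonoid.subset_closure (mem_image_of_mem _ (mem_range_self i))) _
  rcases hb.exists_coeffs j with ⟨c, hc⟩ | ⟨c, hc⟩
  · exact .inl (hc ▸ hsum c)
  · exact .inr (by rw [hc, neg_neg]; exact hsum c)

variable [Finite ι] [P.IsCrystallographic] [P.IsReduced]

noncomputable def IsBase.toBase (hb : P.IsBase b) : P.Base :=
  RootPairing.Base.mk' P.toRootPairing (range b)
    ((linearIndepOn_range_iff hb.injective _).mpr hb.linearIndependent)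
    hb.root_mem_or_neg_mem_closure

lemma IsBase.isDominant_iff (hb : P.IsBase b) {x : M} :
    P.IsDominant b x ↔ ∀ i ∈ hb.toBase.support, 0 ≤ P.coroot' i x := by
  simp [IsBase.toBase, RootPairing.Base.mk', IsDominant]

end RootSystem

theorem schur_vertex_mem_general {ι M N I : Type*} [Fintype ι] [Fintype I]
    [AddCommGroup M] [Module ℝ M] [AddCommGroup N] [Module ℝ N]
    (P : RootSystem ι ℝ M N) (hcrys : P.IsCrystallographic) (hred : P.IsReduced)
    (b : I → ι) (hb : P.IsBase b)
    (lam1 lam2 lam3 lam4 : M)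
    (h4 : P.IsDominant b lam4)
    (hsum : lam1 + lam2 = lam3 + lam4)
    (hineq : ∀ j : ι, P.IsPositiveRoot b j →
      |P.coroot' j (lam1 - lam2)| ≤ |P.coroot' j (lam3 - lam4)|)
    (hP12 : P.orbitPolytope lam1 lam2 ⊆ P.chamber b)
    (hP34 : P.orbitPolytope lam3 lam4 ⊆ P.chamber b) :
    ∀ w : M ≃ₗ[ℝ] M, w ∈ P.weylGroup → lam3 + w lam4 ∈ P.orbitPolytope lam1 lam2 := by
  intro w hw
  have hlam3 : lam3 = lam1 + lam2 - lam4 := eq_sub_of_add_eq hsum.symm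
  have h24 : P.IsDominant b (lam2 - lam4) := fun i => by
    have h12 := RootSystem.isDominant_sub_of_orbitPolytope_subset_chamber hP12 i
    have h34 := RootSystem.isDominant_sub_of_orbitPolytope_subset_chamber hP34 i
    have := hineq (b i) (RootSystem.isPositiveRoot_simple i)
    rw [abs_of_nonneg h12, abs_of_nonneg h34, hlam3] at this
    simp only [map_sub, map_add] at this ⊢
    linarith
  have := P.finiteDimensional
  have := hcrys
  have := hred
  refine mem_convexHull_of_forall_exists_le (P.finite_orbit lam1 lam2) fun F => ?_
  obtain ⟨u, hu, hmax⟩ := RootSystem.exists_mem_weylGroup_forall_apply_le hb.toBase F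
  refine ⟨lam1 + u lam2, ⟨u, hu, rfl⟩, ?_⟩
  have hw4 := hmax w hw lam4 (hb.isDominant_iff.mp h4)
  have h24' : F (lam2 - lam4) ≤ F (u (lam2 - lam4)) :=
    hmax 1 (one_mem _) _ (hb.isDominant_iff.mp h24)
  rw [hlam3]
  simp only [map_add, map_sub] at h24' ⊢
  linarith

/-- under hypothesis (*) and deep dominance, every vertex `λ3 + w(λ4)` lies in
the polytope `P_{λ1,λ2}`. -/
theorem schur_vertex_mem {ι M N I : Type*} [Fintype ι] [Fintype I]
    [AddCommGroup M] [Module ℝ M] [AddCommGroup N] [Module ℝ N]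
    (P : RootSystem ι ℝ M N) (hcrys : P.IsCrystallographic) (hred : P.IsReduced)
    (b : I → ι) (hb : P.IsBase b)
    (lam1 lam2 lam3 lam4 : M)
    (h1 : P.IsDominant b lam1) (h2 : P.IsDominant b lam2)
    (h3 : P.IsDominant b lam3) (h4 : P.IsDominant b lam4)
    (hsum : lam1 + lam2 = lam3 + lam4)
    (hineq : ∀ j : ι, P.IsPositiveRoot b j →
      |P.coroot' j (lam1 - lam2)| ≤ |P.coroot' j (lam3 - lam4)|)
    (hP12 : P.orbitPolytope lam1 lam2 ⊆ P.chamber b)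
    (hP34 : P.orbitPolytope lam3 lam4 ⊆ P.chamber b) :
    ∀ w : M ≃ₗ[ℝ] M, w ∈ P.weylGroup → lam3 + w lam4 ∈ P.orbitPolytope lam1 lam2 :=
  schur_vertex_mem_general P hcrys hred b hb lam1 lam2 lam3 lam4 h4 hsum hineq hP12 hP34
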